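/- arXiv:1101.4434 — 3 statements merged into one kernel-verified Lean document; each statement's English description precedes it below -/
import Mathlib

section
/- For every σ ∈ ℂ with Re(σ) < 0, both roots of the BDF2 characteristic polynomial (1 − (2/3)σ)z² − (4/3)z + 1/3 have modulus strictly less than 1. Hence BDF2 is A-stable. -/
/-!
Solving the characteristic equation for `σ` expresses it through `w = z⁻¹` as
`σ = 3/2 - 2w + w²/2`. For `‖w‖ ≤ 1` the real part of the right-hand side is
`(1 - Re w)² + (1 - ‖w‖²)/2 ≥ 0`, so a root with `‖z‖ ≥ 1` forces `Re σ ≥ 0`.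
-/

namespace BDF2

lemma root_ne_zero {σ z : ℂ} (h : (1 - (2 / 3) * σ) * z ^ 2 - (4 / 3) * z + 1 / 3 = 0) :
    z ≠ 0 := by
  rintro rfl
  norm_num at h

lemma eq_of_root {σ z : ℂ} (h : (1 - (2 / 3) * σ) * z ^ 2 - (4 / 3) * z + 1 / 3 = 0) :
    σ = 3 / 2 - 2 * z⁻¹ + z⁻¹ ^ 2 / 2 := by
  have hz := root_ne_zero h
  field_simp
  linear_combination (-3) * h

lemma re_nonneg_of_norm_le_one {w : ℂ} (hw : ‖w‖ ≤ 1) :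
    0 ≤ (3 / 2 - 2 * w + w ^ 2 / 2).re := by
  have hnormSq : w.re ^ 2 + w.im ^ 2 ≤ 1 := by
    rw [← sq_le_one_iff₀ (norm_nonneg w), Complex.sq_norm, Complex.normSq_apply] at hw
    linarith [sq w.re, sq w.im]
  have hre : (3 / 2 - 2 * w + w ^ 2 / 2).re = (1 - w.re) ^ 2 + (1 - (w.re ^ 2 + w.im ^ 2)) / 2 := by
    simp only [Complex.sub_re, Complex.add_re, Complex.mul_re, Complex.div_re, sq]
    norm_num
    ring
  rw [hre]
  linarith [sq_nonneg (1 - w.re)]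

end BDF2

theorem bdf2_A_stable (σ : ℂ) (hσ : σ.re < 0) :
    ∀ z : ℂ, (1 - (2 / 3) * σ) * z ^ 2 - (4 / 3) * z + 1 / 3 = 0 → ‖z‖ < 1 := by
  intro z hroot
  by_contra! hz
  have hw : ‖z⁻¹‖ ≤ 1 := by
    rw [norm_inv]
    exact inv_le_one_of_one_le₀ hz
  have := BDF2.re_nonneg_of_norm_le_one hw
  rw [← BDF2.eq_of_root hroot] at this
  linarith
end

section
/- If A is an n×n complex matrix all of whose eigenvalues have negative real part, then every solution of Y' = AY tends to 0 as x → ∞. -/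
/-!
By uniqueness of solutions of Lipschitz ODEs, `Y x = exp (x A) Y(0)`. The space `ℂⁿ` is the sum
of the generalized eigenspaces of `A`, and on the one for `μ` the exponential is the finite sum
`exp (x A) v = e^{xμ} ∑_{j<k} x^j/j! (A - μ)^j v`, which tends to `0` because `Re μ < 0`. Hence the
vectors `v` with `exp (x A) v → 0` form a subspace containing every generalized eigenspace, i.e.
all of `ℂⁿ`.
-/

open Filter Topology NormedSpace
open scoped Nat

theorem tendsto_pow_mul_cexp_mul_atTop_nhds_zero {μ : ℂ} (hμ : μ.re < 0) (j : ℕ) :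
    Tendsto (fun x : ℝ => (x : ℂ) ^ j * Complex.exp (x * μ)) atTop (𝓝 0) := by
  rw [tendsto_zero_iff_norm_tendsto_zero]
  refine (tendsto_rpow_mul_exp_neg_mul_atTop_nhds_zero j (-μ.re) (neg_pos.2 hμ)).congr' ?_
  filter_upwards [eventually_ge_atTop 0] with x hx
  simp [Complex.norm_exp, abs_of_nonneg hx, mul_comm]

theorem NormedSpace.exp_eq_cexp_smul_exp_sub {𝔸 : Type*} [NormedRing 𝔸] [NormedAlgebra ℂ 𝔸]
    [CompleteSpace 𝔸] (a : 𝔸) (μ : ℂ) :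
    exp a = Complex.exp μ • exp (a - algebraMap ℂ 𝔸 μ) := by
  have hcomm : Commute (algebraMap ℂ 𝔸 μ) (a - algebraMap ℂ 𝔸 μ) := Algebra.commutes μ _
  have hball (b : 𝔸) : b ∈ Metric.eball 0 (expSeries ℂ 𝔸).radius := by
    simp [expSeries_radius_eq_top]
  conv_lhs => rw [← add_sub_cancel (algebraMap ℂ 𝔸 μ) a]
  rw [exp_add_of_commute_of_mem_ball hcomm (hball _) (hball _), ← algebraMap_exp_comm,
    Complex.exp_eq_exp_ℂ, Algebra.smul_def]

theorem ContinuousLinearMap.map_exp_eq_sum {𝕂 𝔸 F : Type*} [RCLike 𝕂] [NormedRing 𝔸]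
    [NormedAlgebra 𝕂 𝔸] [CompleteSpace 𝔸] [AddCommGroup F] [Module 𝕂 F] [TopologicalSpace F]
    [T2Space F] (L : 𝔸 →L[𝕂] F) {a : 𝔸} {k : ℕ} (h : ∀ j, k ≤ j → L (a ^ j) = 0) :
    L (exp a) = ∑ j ∈ Finset.range k, (j !⁻¹ : 𝕂) • L (a ^ j) := by
  rw [exp_eq_tsum 𝕂, L.map_tsum (expSeries_summable' a)]
  simp_rw [map_smul]
  exact tsum_eq_sum fun j hj => by rw [h j (by simpa using hj), smul_zero]

theorem Module.End.mem_spectrum_of_mem_maxGenEigenspace {R M : Type*} [CommRing R]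
    [AddCommGroup M] [Module R M] {f : Module.End R M} {μ : R} {v : M}
    (hv : v ∈ f.maxGenEigenspace μ) (hv0 : v ≠ 0) : μ ∈ spectrum R f :=
  HasEigenvalue.mem_spectrum <| HasUnifEigenvalue.lt zero_lt_one <|
    (Submodule.ne_bot_iff _).2 ⟨v, hv, hv0⟩

section LinearODE

variable {𝕜 E : Type*} [RCLike 𝕜] [NormedAddCommGroup E] [NormedSpace ℝ E] [NormedSpace 𝕜 E]
  [IsScalarTower ℝ 𝕜 E] [CompleteSpace E]

theorem ContinuousLinearMap.hasDerivAt_exp_smul_apply (f : E →L[𝕜] E) (v : E) (t : ℝ) :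
    HasDerivAt (fun t : ℝ => exp ((t : 𝕜) • f) v) (f (exp ((t : 𝕜) • f) v)) t := by
  have hexp := (apply 𝕜 E v).hasFDerivAt.comp_hasDerivAt (t : 𝕜)
    (hasDerivAt_exp_smul_const' (𝕂 := 𝕜) f t)
  exact (hexp.scomp t (RCLike.ofRealCLM (K := 𝕜)).hasDerivAt).congr_deriv (by simp)

theorem ContinuousLinearMap.eq_exp_smul_apply_of_hasDerivAt (f : E →L[𝕜] E) {Y : ℝ → E}
    (hY : ∀ t, HasDerivAt Y (f (Y t)) t) (t : ℝ) : Y t = exp ((t : 𝕜) • f) (Y 0) := by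
  have hsol := ODE_solution_unique_univ (v := fun _ => f) (s := fun _ => Set.univ) (t₀ := 0)
    (fun _ => f.lipschitz.lipschitzOnWith) (fun t => ⟨hY t, trivial⟩)
    (fun t => ⟨f.hasDerivAt_exp_smul_apply (Y 0) t, trivial⟩) (by simp)
  exact congrFun hsol t

end LinearODE

section StableSubspace

variable {E : Type*} [NormedAddCommGroup E] [NormedSpace ℂ E]

theorem ContinuousLinearMap.exp_smul_apply_eq_sum [CompleteSpace E] {f : E →L[ℂ] E} {μ : ℂ}
    {k : ℕ} {v : E} (hv : ((f - μ • 1) ^ k) v = 0) (t : ℂ) :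
    exp (t • f) v =
      ∑ j ∈ Finset.range k, (t ^ j * Complex.exp (t * μ) / j !) • ((f - μ • 1) ^ j) v := by
  have hshift : t • f - algebraMap ℂ _ (t * μ) = t • (f - μ • 1) := by
    rw [Algebra.algebraMap_eq_smul_one, smul_sub, smul_smul]
  have hvanish (j : ℕ) (hj : k ≤ j) :
      ContinuousLinearMap.apply ℂ E v ((t • (f - μ • 1)) ^ j) = 0 := by
    have hsplit : (f - μ • 1) ^ j = (f - μ • 1) ^ (j - k) * (f - μ • 1) ^ k := by
      rw [← pow_add, Nat.sub_add_cancel hj]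
    rw [ContinuousLinearMap.apply_apply, smul_pow, smul_apply, hsplit, mul_apply_eq_comp, hv,
      map_zero, smul_zero]
  rw [exp_eq_cexp_smul_exp_sub _ (t * μ), hshift, smul_apply,
    ← ContinuousLinearMap.apply_apply (v := v),
    (ContinuousLinearMap.apply ℂ E v).map_exp_eq_sum hvanish, Finset.smul_sum]
  refine Finset.sum_congr rfl fun j _ => ?_
  rw [ContinuousLinearMap.apply_apply, smul_pow, smul_apply, smul_smul, smul_smul]
  congr 1
  field_simp

theorem ContinuousLinearMap.tendsto_exp_smul_apply_of_mem_maxGenEigenspace [CompleteSpace E]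
    {f : E →L[ℂ] E} {μ : ℂ} (hμ : μ.re < 0) {v : E}
    (hv : v ∈ Module.End.maxGenEigenspace (f : Module.End ℂ E) μ) :
    Tendsto (fun x : ℝ => exp ((x : ℂ) • f) v) atTop (𝓝 0) := by
  obtain ⟨k, hk⟩ := (Module.End.mem_maxGenEigenspace _ _ _).1 hv
  rw [← toLinearMap_one, ← toLinearMap_smul, ← toLinearMap_sub, ← toLinearMap_pow,
    coe_coe] at hk
  simp_rw [exp_smul_apply_eq_sum hk]
  rw [← Finset.sum_const_zero (s := Finset.range k)]
  refine tendsto_finsetSum _ fun j _ => ?_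
  rw [← zero_smul ℂ (((f - μ • 1) ^ j) v)]
  refine Tendsto.smul_const ?_ _
  simpa using (tendsto_pow_mul_cexp_mul_atTop_nhds_zero hμ j).div_const (j ! : ℂ)

def ContinuousLinearMap.stableSubspace (f : E →L[ℂ] E) : Submodule ℂ E where
  carrier := {v | Tendsto (fun x : ℝ => exp ((x : ℂ) • f) v) atTop (𝓝 0)}
  add_mem' {v w} hv hw := by simpa using hv.add hw
  zero_mem' := by simp
  smul_mem' c v hv := by simpa using hv.const_smul c

theorem ContinuousLinearMap.stableSubspace_eq_top [FiniteDimensional ℂ E] {f : E →L[ℂ] E}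
    (hf : ∀ μ ∈ spectrum ℂ f, μ.re < 0) : f.stableSubspace = ⊤ := by
  have : CompleteSpace E := FiniteDimensional.complete ℂ E
  rw [eq_top_iff, ← Module.End.iSup_maxGenEigenspace_eq_top (f : Module.End ℂ E)]
  refine iSup_le fun μ v hv => ?_
  rcases eq_or_ne v 0 with rfl | hv0
  · exact zero_mem _
  have hμ : μ ∈ spectrum ℂ f := by
    rw [spectrum_eq]
    exact Module.End.mem_spectrum_of_mem_maxGenEigenspace hv hv0
  exact tendsto_exp_smul_apply_of_mem_maxGenEigenspace (hf μ hμ) hv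

end StableSubspace

theorem asymptotic_stability (n : ℕ) (A : Matrix (Fin n) (Fin n) ℂ)
    (hA : ∀ μ ∈ spectrum ℂ A, μ.re < 0)
    (Y : ℝ → Fin n → ℂ) (hY : ∀ x, HasDerivAt Y (A.mulVec (Y x)) x) :
    Tendsto Y atTop (𝓝 0) := by
  -- Working with the operator of `A` avoids choosing one of the non-canonical matrix norms.
  let f : (Fin n → ℂ) →L[ℂ] Fin n → ℂ := LinearMap.toContinuousLinearMap (Matrix.toLin' A)
  have hf : ∀ μ ∈ spectrum ℂ f, μ.re < 0 := by
    rwa [ContinuousLinearMap.spectrum_eq, LinearMap.coe_toContinuousLinearMap,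
      Matrix.spectrum_toLin']
  rw [funext (f.eq_exp_smul_apply_of_hasDerivAt (𝕜 := ℂ) hY)]
  exact Submodule.eq_top_iff'.1 (f.stableSubspace_eq_top hf) (Y 0)
end

section
/- A linear multistep recurrence y_{n+k} = Σ_{i=1}^{k} α_i y_{n+k-i} applied termwise (i.e., the homogeneous linear recurrence with characteristic polynomial p(z) = z^k − Σ α_i z^{k-i}): every solution sequence tends to 0 as n → ∞ if and only if all roots of p have modulus strictly less than 1. -/
open Filter Topology Polynomial Matrix

attribute [local instance] Matrix.linftyOpNormedRing Matrix.linftyOpNormedAlgebra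

theorem linear_recurrence_stability (k : ℕ) (hk : 0 < k) (α : Fin k → ℂ) :
    (∀ y : ℕ → ℂ, (∀ n, y (n + k) = ∑ i : Fin k, α i * y (n + (k - 1 - i.val))) →
        Tendsto y atTop (𝓝 0)) ↔
    (∀ z : ℂ, ((X : Polynomial ℂ) ^ k - ∑ i : Fin k, C (α i) * X ^ (k - 1 - i.val)).eval z = 0
        → ‖z‖ < 1) := by
  constructor
  · -- easy direction: z^n is a solution
    intro H z hz
    have hzk : z ^ k = ∑ i : Fin k, α i * z ^ (k - 1 - i.val) := by
      simpa [Polynomial.eval_finset_sum, sub_eq_zero] using hz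
    have hsol : ∀ n, (fun n : ℕ => z ^ n) (n + k)
        = ∑ i : Fin k, α i * (fun n : ℕ => z ^ n) (n + (k - 1 - i.val)) := by
      intro n
      simp only [pow_add, hzk, Finset.mul_sum]
      exact Finset.sum_congr rfl fun x _ => by ring
    have ht := (H _ hsol).norm
    rw [norm_zero] at ht
    by_contra hlt
    push_neg at hlt
    have hev := ht.eventually_lt_const one_pos
    obtain ⟨n, hn⟩ := hev.exists
    have : (1:ℝ) ≤ ‖z ^ n‖ := by
      rw [norm_pow]; exact one_le_pow₀ hlt
    linarith
  · intro H y hy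
    -- companion matrix
    set A : Matrix (Fin k) (Fin k) ℂ := fun i j =>
      if (i : ℕ) + 1 = k then α j.rev else if (j : ℕ) = (i : ℕ) + 1 then 1 else 0 with hA
    have hrow1 : ∀ (w : Fin k → ℂ) (i : Fin k) (h : (i:ℕ) + 1 < k),
        (A *ᵥ w) i = w ⟨(i:ℕ)+1, h⟩ := by
      intro w i h
      have hne : ¬ ((i:ℕ) + 1 = k) := h.ne
      simp only [Matrix.mulVec, dotProduct, hA, hne, if_false]
      have : ∀ j : Fin k, ((j:ℕ) = (i:ℕ) + 1) = (j = ⟨(i:ℕ)+1, h⟩) := by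
        intro j; rw [Fin.ext_iff]
      simp only [this, ite_mul, one_mul, zero_mul]
      simp
    have hrow2 : ∀ (w : Fin k → ℂ),
        (A *ᵥ w) ⟨k-1, by omega⟩ = ∑ j : Fin k, α j.rev * w j := by
      intro w
      have hpos : (k - 1) + 1 = k := by omega
      simp only [Matrix.mulVec, dotProduct, hA, hpos, if_true]
    -- state vector
    set v : ℕ → Fin k → ℂ := fun n j => y (n + (j:ℕ)) with hv
    have hstep : ∀ n, v (n+1) = A *ᵥ v n := by
      intro n
      funext j
      rcases lt_or_eq_of_le (Nat.succ_le_of_lt j.is_lt) with h | h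
      · rw [hrow1 (v n) j h]
        show y (n + 1 + (j:ℕ)) = y (n + ((j:ℕ)+1))
        congr 1; omega
      · have hj : j = ⟨k-1, by omega⟩ := by
          rw [Fin.ext_iff]; simp; omega
        rw [hj, hrow2 (v n)]
        show y (n + 1 + (k-1)) = _
        have : n + 1 + (k-1) = n + k := by omega
        rw [this, hy n]
        refine (Fintype.sum_bijective Fin.rev Fin.rev_bijective _ _ fun j => ?_).symm
        show α j.rev * v n j = α j.rev * y (n + (k - 1 - (j.rev : ℕ)))
        have hjv : (j.rev : ℕ) = k - ((j:ℕ) + 1) := Fin.val_rev j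
        have hlt := j.is_lt
        have heq : k - 1 - (j.rev : ℕ) = (j : ℕ) := by omega
        rw [heq]
    have hsol : ∀ n, v n = (A ^ n) *ᵥ v 0 := by
      intro n
      induction n with
      | zero => simp [Matrix.one_mulVec]
      | succ n ih =>
        rw [hstep n, ih, Matrix.mulVec_mulVec, ← pow_succ']
    -- spectrum of A consists of roots of p
    have hspec : ∀ z ∈ spectrum ℂ A, ‖z‖₊ < 1 := by
      intro z hz
      rw [spectrum.mem_iff] at hz
      have hdet : (algebraMap ℂ (Matrix (Fin k) (Fin k) ℂ) z - A).det = 0 := by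
        by_contra hd
        exact hz ((Matrix.isUnit_iff_isUnit_det _).mpr (isUnit_iff_ne_zero.mpr hd))
      obtain ⟨w, hw0, hww⟩ := (Matrix.exists_mulVec_eq_zero_iff).mpr hdet
      have hAw : A *ᵥ w = z • w := by
        rw [Matrix.sub_mulVec] at hww
        have halg : (algebraMap ℂ (Matrix (Fin k) (Fin k) ℂ) z) = z • (1 : Matrix (Fin k) (Fin k) ℂ) := by
          rw [Algebra.algebraMap_eq_smul_one]
        rw [halg, Matrix.smul_mulVec, Matrix.one_mulVec] at hww
        have := sub_eq_zero.mp hww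
        exact this.symm
      have key : ∀ m (hm : m < k), w ⟨m, hm⟩ = z ^ m * w ⟨0, hk⟩ := by
        intro m
        induction m with
        | zero => intro hm; simp
        | succ m ih =>
          intro hm
          have hm' : m < k := by omega
          have h1 : (A *ᵥ w) ⟨m, hm'⟩ = w ⟨m+1, hm⟩ := hrow1 w ⟨m, hm'⟩ hm
          have h2 : (A *ᵥ w) ⟨m, hm'⟩ = z * w ⟨m, hm'⟩ := by
            rw [hAw]; simp only [Pi.smul_apply, smul_eq_mul]
          rw [h1, ih hm'] at h2
          rw [h2]; ring
      have hw00 : w ⟨0, hk⟩ ≠ 0 := by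
        intro h0
        apply hw0
        funext j
        have := key (j : ℕ) j.is_lt
        rw [Fin.eta] at this
        rw [this, h0, mul_zero]
        simp
      have h3 : (A *ᵥ w) ⟨k-1, by omega⟩ = z * w ⟨k-1, by omega⟩ := by
        rw [hAw]; simp only [Pi.smul_apply, smul_eq_mul]
      rw [hrow2 w] at h3
      have h4 : ∀ j : Fin k, w j = z ^ (j:ℕ) * w ⟨0, hk⟩ := by
        intro j
        have := key (j : ℕ) j.is_lt
        rwa [Fin.eta] at this
      have h5 : (∑ j : Fin k, α j.rev * z ^ (j:ℕ)) * w ⟨0, hk⟩ = z ^ k * w ⟨0, hk⟩ := by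
        have hzk : z * z ^ (k-1) = z ^ k := by
          rw [← pow_succ']; congr 1; omega
        calc (∑ j : Fin k, α j.rev * z ^ (j:ℕ)) * w ⟨0, hk⟩
            = ∑ j : Fin k, α j.rev * w j := by
              rw [Finset.sum_mul]
              exact Finset.sum_congr rfl fun j _ => by rw [h4 j]; ring
          _ = z * w ⟨k-1, by omega⟩ := h3
          _ = z ^ k * w ⟨0, hk⟩ := by
              rw [key (k-1) (by omega), ← mul_assoc, hzk]
      have h6 : ∑ j : Fin k, α j.rev * z ^ (j:ℕ) = z ^ k := mul_right_cancel₀ hw00 h5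
      have h7 : ∑ j : Fin k, α j.rev * z ^ (j:ℕ) = ∑ i : Fin k, α i * z ^ (k - 1 - i.val) := by
        refine Fintype.sum_bijective Fin.rev Fin.rev_bijective _ _ fun j => ?_
        congr 2
        rw [Fin.val_rev]
        have := j.is_lt
        omega
      have hroot : ((X : Polynomial ℂ) ^ k - ∑ i : Fin k, C (α i) * X ^ (k - 1 - i.val)).eval z = 0 := by
        simp only [Polynomial.eval_sub, Polynomial.eval_pow, Polynomial.eval_X,
          Polynomial.eval_finset_sum, Polynomial.eval_mul, Polynomial.eval_C]
        rw [← h7, h6, sub_self]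
      have := H z hroot
      simpa [← NNReal.coe_lt_coe] using this
    -- spectral radius arguments
    haveI : Nonempty (Fin k) := ⟨⟨0, hk⟩⟩
    have hsr : spectralRadius ℂ A < 1 := by
      simpa using spectrum.spectralRadius_lt_of_forall_lt (a := A) (r := 1) hspec
    obtain ⟨r, hr1, hr2⟩ := ENNReal.lt_iff_exists_nnreal_btwn.mp hsr
    have hgel := spectrum.pow_nnnorm_pow_one_div_tendsto_nhds_spectralRadius A
    have hev : ∀ᶠ n : ℕ in atTop, (‖A ^ n‖₊ : ENNReal) ^ (1/(n:ℝ)) < (r : ENNReal) :=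
      hgel.eventually_lt_const hr1
    have hr2' : (r:ℝ) < 1 := by
      have : (r : NNReal) < 1 := by exact_mod_cast hr2
      exact_mod_cast this
    have hineq : ∀ᶠ n in atTop, ‖A ^ n‖ ≤ (r:ℝ)^n := by
      filter_upwards [hev, eventually_ge_atTop 1] with n hn hn1
      have hne : (n:ℝ) ≠ 0 := by positivity
      have h1 : ((‖A ^ n‖₊ : ENNReal) ^ (1/(n:ℝ))) ^ (n:ℝ) ≤ (r : ENNReal) ^ (n:ℝ) :=
        ENNReal.rpow_le_rpow hn.le (Nat.cast_nonneg n)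
      rw [← ENNReal.rpow_mul, one_div, inv_mul_cancel₀ hne, ENNReal.rpow_one,
        ENNReal.rpow_natCast, ← ENNReal.coe_pow, ENNReal.coe_le_coe] at h1
      calc ‖A ^ n‖ = ((‖A ^ n‖₊ : NNReal) : ℝ) := rfl
        _ ≤ ((r ^ n : NNReal) : ℝ) := by exact_mod_cast h1
        _ = (r:ℝ)^n := by push_cast; ring
    have hAn : Tendsto (fun n => ‖A ^ n‖) atTop (𝓝 0) :=
      squeeze_zero' (Eventually.of_forall fun n => norm_nonneg _) hineq
        (tendsto_pow_atTop_nhds_zero_of_lt_one r.coe_nonneg hr2')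
    have hbound : ∀ n, ‖y n‖ ≤ ‖A ^ n‖ * ‖v 0‖ := by
      intro n
      have h1 : y n = v n ⟨0, hk⟩ := by simp [hv]
      calc ‖y n‖ = ‖v n ⟨0, hk⟩‖ := by rw [h1]
        _ ≤ ‖v n‖ := norm_le_pi_norm (v n) _
        _ = ‖(A ^ n) *ᵥ v 0‖ := by rw [hsol n]
        _ ≤ ‖A ^ n‖ * ‖v 0‖ := Matrix.linfty_opNorm_mulVec _ _
    exact squeeze_zero_norm hbound (by simpa using hAn.mul_const ‖v 0‖)
end
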